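/- arXiv:2405.00359 — 3 statements merged into one kernel-verified Lean document; each statement's English description precedes it below -/
import Mathlib

section
/- Consider the random update UpdateWithCycle: given nonnegative reals β1, β2 (not both zero), bases B1, B2 of a matroid, and a directed cycle in D_M(B1,B2) with vertices u_0, v_0, ..., u_{l-1}, v_{l-1} (u_i ∈ B1\B2, v_i ∈ B2\B1), with probability β2/(β1+β2) pick i uniformly from {0,...,l-1} and set B1' = B1 + v_i - u_i, B2' = B2; otherwise pick i uniformly and set B1' = B1, B2' = B2 + u_{i+1} - v_i (indices mod l). Then E[β1·1_{B1'} + β2·1_{B2'}] = β1·1_{B1} + β2·1_{B2}, where 1_S denotes the characteristic vector of S. -/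
/-! Exchanging `b ∈ B` for `a ∉ B` changes `1_B` by `1_a - 1_b`. Summed over the cycle, the moves
on `B1` change `1_{B1}` by `D = ∑ i, (1_{v i} - 1_{u i})`, while the moves on `B2` change `1_{B2}`
by `∑ i, (1_{u (i+1)} - 1_{v i}) = -D`. Weighted by the coin probabilities, both contribute
`β1 β2 D / (l (β1 + β2))` with opposite signs, so they cancel. -/

open Set Finset

/-- The indicator (characteristic) vector of a set, with real values. -/
noncomputable def charVec {α : Type*} (S : Set α) : α → ℝ :=
  S.indicator (fun _ => (1 : ℝ))

section Exchange

variable {α ι : Type*}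

lemma charVec_insert_diff_singleton {S : Set α} {a b : α} (ha : a ∉ S) (hb : b ∈ S) (w : α) :
    charVec (insert a (S \ {b})) w = charVec S w + charVec {a} w - charVec {b} w := by
  simp only [charVec, Set.indicator]
  split_ifs <;> simp_all

lemma sum_charVec_insert_diff_singleton [Fintype ι] {S : Set α} {a b : ι → α}
    (ha : ∀ i, a i ∉ S) (hb : ∀ i, b i ∈ S) (w : α) :
    ∑ i, charVec (insert (a i) (S \ {b i})) w
      = Fintype.card ι * charVec S w + ∑ i, (charVec {a i} w - charVec {b i} w) := by
  simp only [charVec_insert_diff_singleton (ha _) (hb _), add_sub_assoc, sum_add_distrib,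
    sum_const, card_univ, nsmul_eq_mul]

end Exchange

theorem updateWithCycle_expectation_general {α : Type*} (B1 B2 : Set α)
    (β1 β2 : ℝ) (hβ : 0 < β1 + β2)
    (l : ℕ) [NeZero l] (u v : ZMod l → α)
    (hu : ∀ i, u i ∈ B1 \ B2) (hv : ∀ i, v i ∈ B2 \ B1) :
    ∀ w : α,
      (β2 / (β1 + β2)) * ((l : ℝ)⁻¹ *
          ∑ i : ZMod l, (β1 * charVec (insert (v i) (B1 \ {u i})) w + β2 * charVec B2 w))
      + (β1 / (β1 + β2)) * ((l : ℝ)⁻¹ *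
          ∑ i : ZMod l, (β1 * charVec B1 w + β2 * charVec (insert (u (i + 1)) (B2 \ {v i})) w))
      = β1 * charVec B1 w + β2 * charVec B2 w := by
  intro w
  set D := ∑ i, (charVec {v i} w - charVec {u i} w)
  have hshift : ∑ i, (charVec {u (i + 1)} w - charVec {v i} w) = -D := by
    rw [sum_sub_distrib,
      Fintype.sum_equiv (Equiv.addRight 1) (fun i => charVec {u (i + 1)} w)
        (fun i => charVec {u i} w) fun _ => rfl,
      ← neg_sub, ← sum_sub_distrib]
  have hB1 := sum_charVec_insert_diff_singleton (fun i => (hv i).2) (fun i => (hu i).1) w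
  have hB2 := sum_charVec_insert_diff_singleton (a := fun i => u (i + 1))
    (fun i => (hu (i + 1)).2) (fun i => (hv i).1) w
  simp only [sum_add_distrib, ← mul_sum, sum_const, card_univ, nsmul_eq_mul, hB1, hB2,
    hshift, ZMod.card] at *
  have hl : (l : ℝ) ≠ 0 := Nat.cast_ne_zero.mpr (NeZero.ne l)
  field_simp
  ring

/-- `UpdateWithCycle` preserves the point in expectation: given coefficients
`β1, β2 ≥ 0` with `β1 + β2 > 0`, bases `B1, B2` of a matroid `M`, and a directed cycle
in `D_M(B1, B2)` with vertices `u 0, v 0, …, u (l-1), v (l-1)` (`u i ∈ B1 \ B2`,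
`v i ∈ B2 \ B1`), the update which with probability `β2 / (β1 + β2)` replaces `B1` by
`B1 + v i - u i` for uniformly random `i`, and otherwise replaces `B2` by
`B2 + u (i+1) - v i` for uniformly random `i`, satisfies
`E[β1 • 1_{B1'} + β2 • 1_{B2'}] = β1 • 1_{B1} + β2 • 1_{B2}` (coordinatewise). -/
theorem updateWithCycle_expectation {α : Type*} (M : Matroid α) (B1 B2 : Set α)
    (hB1 : M.IsBase B1) (hB2 : M.IsBase B2)
    (β1 β2 : ℝ) (hβ1 : 0 ≤ β1) (hβ2 : 0 ≤ β2) (hβ : 0 < β1 + β2)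
    (l : ℕ) [NeZero l] (u v : ZMod l → α)
    (hu : ∀ i, u i ∈ B1 \ B2) (hv : ∀ i, v i ∈ B2 \ B1)
    (he1 : ∀ i, M.Indep (insert (v i) (B1 \ {u i})))
    (he2 : ∀ i, M.Indep (insert (u (i + 1)) (B2 \ {v i}))) :
    ∀ w : α,
      (β2 / (β1 + β2)) * ((l : ℝ)⁻¹ *
          ∑ i : ZMod l, (β1 * charVec (insert (v i) (B1 \ {u i})) w + β2 * charVec B2 w))
      + (β1 / (β1 + β2)) * ((l : ℝ)⁻¹ *
          ∑ i : ZMod l, (β1 * charVec B1 w + β2 * charVec (insert (u (i + 1)) (B2 \ {v i})) w))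
      = β1 * charVec B1 w + β2 * charVec B2 w :=
  updateWithCycle_expectation_general B1 B2 β1 β2 hβ l u v hu hv
end

section
/- Let x ∈ R^n_+ and let X = (X_1,...,X_n) be a nonnegative random vector with E[X] = x such that X - x almost surely has at most one positive coordinate and at most one negative coordinate. Then E[F(X)] ≥ F(x) for any function F that is the multilinear extension of a submodular set function. -/
open Finset MeasureTheory

/-- A set function `f` on a finite ground set `V` is submodular. -/
def Submodular {V : Type*} [Fintype V] [DecidableEq V] (f : Finset V → ℝ) : Prop :=
  ∀ A B : Finset V, f (A ∪ B) + f (A ∩ B) ≤ f A + f B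

/-- The multilinear extension `F` of a set function `f`. -/
def multilinearExt {V : Type*} [Fintype V] [DecidableEq V] (f : Finset V → ℝ)
    (x : V → ℝ) : ℝ :=
  ∑ S : Finset V, f S * ((∏ v ∈ S, x v) * ∏ v ∈ Sᶜ, (1 - x v))

/-! The partial derivative of the multilinear extension `F` in direction `v` is the multilinear
extension of the discrete derivative `S ↦ f (S ∪ {v}) - f (S \ {v})`, and `F` is affine in each
coordinate; so `F y` equals its first-order Taylor polynomial at `x` whenever `y` and `x` differ in
at most one coordinate. Submodularity makes the mixed second discrete derivatives nonpositive,
hence on `[0,1]^V` every partial derivative of `F` can only grow when the other coordinates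
decrease. Going from `x` down to `z = x ⊓ y` along the negative coordinate of `y - x` and then up
to `y` along the positive one, the slope used in the second step is at least the one at `x`, so
`F y ≥ F x + ⟨∇F(x), y - x⟩`. Taking expectations kills the linear term since `E[X] = x`. -/

section

variable {V : Type*} [Fintype V] [DecidableEq V]

def discreteDeriv (f : Finset V → ℝ) (v : V) (S : Finset V) : ℝ :=
  f (insert v S) - f (S.erase v)

theorem multilinearExt_eq_sum_powerset_erase (f : Finset V → ℝ) (y : V → ℝ) (v : V) :
    multilinearExt f y = ∑ T ∈ (univ.erase v).powerset,
      ((1 - y v) * f T + y v * f (insert v T)) *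
        ((∏ u ∈ T, y u) * ∏ u ∈ Tᶜ.erase v, (1 - y u)) := by
  have hv : v ∉ univ.erase v := notMem_erase v univ
  conv_lhs => rw [multilinearExt, ← powerset_univ, ← insert_erase (mem_univ v),
    sum_powerset_insert hv, ← sum_add_distrib]
  refine sum_congr rfl fun T hT => ?_
  have hvT : v ∉ T := fun h => hv (mem_powerset.mp hT h)
  rw [← mul_prod_erase Tᶜ _ (mem_compl.mpr hvT), prod_insert hvT, compl_insert]
  ring

theorem multilinearExt_update (f : Finset V → ℝ) (y : V → ℝ) (v : V) (c : ℝ) :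
    multilinearExt f (Function.update y v c)
      = multilinearExt f y + (c - y v) * multilinearExt (discreteDeriv f v) y := by
  simp only [multilinearExt_eq_sum_powerset_erase _ _ v, mul_sum, ← sum_add_distrib]
  refine sum_congr rfl fun T hT => ?_
  have hvT : v ∉ T := fun h => notMem_erase v univ (mem_powerset.mp hT h)
  have hfix : ∏ u ∈ Tᶜ.erase v, (1 - Function.update y v c u)
      = ∏ u ∈ Tᶜ.erase v, (1 - y u) :=
    prod_congr rfl fun u hu => by rw [Function.update_of_ne (ne_of_mem_erase hu)]
  rw [prod_update_of_notMem hvT, hfix, Function.update_self, discreteDeriv, discreteDeriv,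
    insert_idem, erase_insert hvT, erase_eq_of_notMem hvT]
  ring

theorem multilinearExt_eq_add_sum_of_subsingleton (f : Finset V → ℝ) {x y : V → ℝ}
    (hxy : {u | y u ≠ x u}.Subsingleton) :
    multilinearExt f y
      = multilinearExt f x + ∑ u, (y u - x u) * multilinearExt (discreteDeriv f u) x := by
  by_cases hdiff : ∃ v, y v ≠ x v
  · obtain ⟨v, hv⟩ := hdiff
    have hoff : ∀ u, u ≠ v → y u = x u := fun u hu => by_contra fun h => hu (hxy h hv)
    have hy : y = Function.update x v (y v) := funext fun u => by
      rcases eq_or_ne u v with rfl | hu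
      · simp
      · rw [Function.update_of_ne hu, hoff u hu]
    rw [sum_eq_single v (fun u _ hu => by rw [hoff u hu, sub_self, zero_mul]) (by simp),
      ← multilinearExt_update, ← hy]
  · push Not at hdiff
    obtain rfl : y = x := funext hdiff
    simp

theorem multilinearExt_nonpos {g : Finset V → ℝ} (hg : ∀ S, g S ≤ 0) {x : V → ℝ}
    (hx₀ : ∀ u, 0 ≤ x u) (hx₁ : ∀ u, x u ≤ 1) : multilinearExt g x ≤ 0 :=
  sum_nonpos fun S _ => mul_nonpos_of_nonpos_of_nonneg (hg S) <|
    mul_nonneg (prod_nonneg fun u _ => hx₀ u) (prod_nonneg fun u _ => sub_nonneg.mpr (hx₁ u))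

end

namespace Submodular

variable {V : Type*} [Fintype V] [DecidableEq V]

theorem discreteDeriv_discreteDeriv_nonpos {f : Finset V → ℝ} (hf : Submodular f) (v w : V)
    (S : Finset V) : discreteDeriv (discreteDeriv f v) w S ≤ 0 := by
  rcases eq_or_ne v w with rfl | hvw
  · have : insert v (S.erase v) = insert v S := by grind
    simp [discreteDeriv, erase_insert_eq_erase, this]
  · have hsub := hf (insert v (S.erase w)) (insert w (S.erase v))
    have hunion : insert v (S.erase w) ∪ insert w (S.erase v) = insert v (insert w S) := by grind
    have hinter : insert v (S.erase w) ∩ insert w (S.erase v) = (S.erase w).erase v := by grind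
    have hB : (insert w S).erase v = insert w (S.erase v) := by grind
    rw [hunion, hinter] at hsub
    simp only [discreteDeriv, hB]
    linarith

theorem multilinearExt_discreteDeriv_le_of_le {f : Finset V → ℝ} (hf : Submodular f)
    {x z : V → ℝ} (hx₀ : ∀ u, 0 ≤ x u) (hx₁ : ∀ u, x u ≤ 1) (hzx : z ≤ x)
    (hz : {u | z u ≠ x u}.Subsingleton) (v : V) :
    multilinearExt (discreteDeriv f v) x ≤ multilinearExt (discreteDeriv f v) z := by
  rw [multilinearExt_eq_add_sum_of_subsingleton _ hz]
  exact le_add_of_nonneg_right <| sum_nonneg fun w _ =>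
    mul_nonneg_of_nonpos_of_nonpos (sub_nonpos.mpr (hzx w))
      (multilinearExt_nonpos (hf.discreteDeriv_discreteDeriv_nonpos v w) hx₀ hx₁)

theorem multilinearExt_add_sum_le {f : Finset V → ℝ} (hf : Submodular f) {x y : V → ℝ}
    (hx₀ : ∀ u, 0 ≤ x u) (hx₁ : ∀ u, x u ≤ 1)
    (hpos : {u | x u < y u}.Subsingleton) (hneg : {u | y u < x u}.Subsingleton) :
    multilinearExt f x + ∑ u, (y u - x u) * multilinearExt (discreteDeriv f u) x
      ≤ multilinearExt f y := by
  set z := x ⊓ y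
  have hzx : {u | z u ≠ x u}.Subsingleton :=
    hneg.anti fun u hu => lt_of_not_ge fun h => hu (min_eq_left h)
  have hyz : {u | y u ≠ z u}.Subsingleton :=
    hpos.anti fun u hu => lt_of_not_ge fun h => hu (min_eq_right h).symm
  have hgrad : ∀ u, (y u - z u) * multilinearExt (discreteDeriv f u) x
      ≤ (y u - z u) * multilinearExt (discreteDeriv f u) z := fun u =>
    mul_le_mul_of_nonneg_left
      (hf.multilinearExt_discreteDeriv_le_of_le hx₀ hx₁ inf_le_left hzx u)
      (sub_nonneg.mpr inf_le_right)
  calc multilinearExt f x + ∑ u, (y u - x u) * multilinearExt (discreteDeriv f u) x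
      = multilinearExt f x + ∑ u, (z u - x u) * multilinearExt (discreteDeriv f u) x
          + ∑ u, (y u - z u) * multilinearExt (discreteDeriv f u) x := by
        rw [add_assoc, ← sum_add_distrib]
        congr! 2 with u
        ring
    _ ≤ multilinearExt f z + ∑ u, (y u - z u) * multilinearExt (discreteDeriv f u) z := by
        rw [← multilinearExt_eq_add_sum_of_subsingleton f hzx]
        exact add_le_add_right (sum_le_sum fun u _ => hgrad u) _
    _ = multilinearExt f y := (multilinearExt_eq_add_sum_of_subsingleton f hyz).symm

end Submodular

/-- Lemma VI.2 of Chekuri–Vondrák–Zenklusen: if `X` is a random nonnegative vector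
(taking values in `[0,1]^V`) with `E[X] = x` such that almost surely `X - x` has at most
one positive coordinate and at most one negative coordinate, then `E[F(X)] ≥ F(x)` for the
multilinear extension `F` of any submodular function `f`. -/
theorem expectation_multilinear_ge {V : Type*} [Fintype V] [DecidableEq V]
    (f : Finset V → ℝ) (hf : Submodular f)
    {Ω : Type*} [MeasurableSpace Ω] (μ : Measure Ω) [IsProbabilityMeasure μ]
    (X : Ω → V → ℝ) (x : V → ℝ)
    (hXnonneg : ∀ᵐ ω ∂μ, ∀ v, 0 ≤ X ω v) (hXle : ∀ᵐ ω ∂μ, ∀ v, X ω v ≤ 1)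
    (hXint : ∀ v, Integrable (fun ω => X ω v) μ)
    (hmean : ∀ v, (∫ ω, X ω v ∂μ) = x v)
    (hpos : ∀ᵐ ω ∂μ, ∀ v w, x v < X ω v → x w < X ω w → v = w)
    (hneg : ∀ᵐ ω ∂μ, ∀ v w, X ω v < x v → X ω w < x w → v = w)
    (hFint : Integrable (fun ω => multilinearExt f (X ω)) μ) :
    multilinearExt f x ≤ ∫ ω, multilinearExt f (X ω) ∂μ := by
  have hx₀ : ∀ v, 0 ≤ x v := fun v =>
    hmean v ▸ integral_nonneg_of_ae (hXnonneg.mono fun ω h => h v)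
  have hx₁ : ∀ v, x v ≤ 1 := fun v => by
    simpa [hmean v] using
      integral_mono_ae (hXint v) (integrable_const 1) (hXle.mono fun ω h => h v)
  set D := fun u => multilinearExt (discreteDeriv f u) x
  have hint : ∀ u, Integrable (fun ω => (X ω u - x u) * D u) μ :=
    fun u => ((hXint u).sub (integrable_const _)).mul_const _
  have hint_sum : Integrable (fun ω => ∑ u, (X ω u - x u) * D u) μ :=
    integrable_finsetSum _ fun u _ => hint u
  have hcentered : ∀ u, ∫ ω, (X ω u - x u) * D u ∂μ = 0 := fun u => by
    rw [integral_mul_const, integral_sub (hXint u) (integrable_const _), hmean u]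
    simp
  calc multilinearExt f x = ∫ ω, (multilinearExt f x + ∑ u, (X ω u - x u) * D u) ∂μ := by
        rw [integral_add (integrable_const _) hint_sum,
          integral_finsetSum _ fun u _ => hint u]
        simp [hcentered]
    _ ≤ ∫ ω, multilinearExt f (X ω) ∂μ := by
        refine integral_mono_ae ((integrable_const _).add hint_sum) hFint ?_
        filter_upwards [hpos, hneg] with ω hpos hneg
        exact hf.multilinearExt_add_sum_le hx₀ hx₁ (fun v hv w hw => hpos v w hv hw)
          (fun v hv w hw => hneg v w hv hw)
end

section
/- Let M be a matroid of rank r with maximum weight basis B with respect to weights w : V → R, and let w' agree with w except w'(v) < w(v) for a single element v. If v ∉ B, then B is also a maximum weight basis with respect to w'. If v ∈ B, and u is an element of (V \ B) ∪ {v} maximizing w'(u) subject to (B - v) + u being independent, then B - v + u is a maximum weight basis of M with respect to w'. -/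
open Finset

/-- `B` is a maximum weight basis of `M` with respect to weights `w`. -/
def IsMaxWeightBase {α : Type*} [Fintype α] (M : Matroid α) (w : α → ℝ) (B : Set α) : Prop :=
  M.IsBase B ∧ ∀ B' : Set α, M.IsBase B' → ∑ e ∈ B'.toFinite.toFinset, w e ≤ ∑ e ∈ B.toFinite.toFinset, w e

open Set

/-!
Lowering `w v` cannot increase the weight of any basis, so if `v ∉ B` nothing changes. If `v ∈ B`,
take any basis `B'`. When `v ∈ B'`, both `B'` and `B` lose exactly `w v - w' v`, so
`w' B' ≤ w' v + w (B - v)`. When `v ∉ B'`, symmetric basis exchange gives `g ∈ B' \ B` with both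
`B - v + g` and `B' - g + v` bases; maximality of `B` against `B' - g + v` yields
`w' B' = w B' ≤ w g + w (B - v)`. Either way `w' B'` is at most the `w'`-weight of `B - v + g`
for some admissible `g`, hence at most that of `B - v + u`.
-/

theorem finsum_mem_eq_add_sdiff_singleton {α M : Type*} [AddCommMonoid M] {f : α → M}
    {s : Set α} {a : α} (ha : a ∈ s) (hs : s.Finite) :
    ∑ᶠ e ∈ s, f e = f a + ∑ᶠ e ∈ s \ {a}, f e := by
  conv_lhs => rw [← insert_eq_of_mem ha, ← insert_sdiff_singleton]
  exact finsum_mem_insert f (fun h => h.2 rfl) hs.sdiff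

namespace Matroid

variable {α : Type*} {M : Matroid α} {B B' : Set α} {v : α}

theorem IsBase.exists_symm_exchange (hB : M.IsBase B) (hB' : M.IsBase B') (hv : v ∈ B \ B') :
    ∃ g ∈ B' \ B, M.IsBase (insert g (B \ {v})) ∧ M.IsBase (insert v (B' \ {g})) := by
  -- `g` is a second element of the fundamental circuit of `v` in `B'` and the cocircuit
  -- `E - cl (B - v)`; a circuit and a cocircuit never meet in exactly one element.
  have hvE : v ∈ M.E := hB.subset_ground hv.1
  have hC := hB'.fundCircuit_isCircuit hvE hv.2
  have hK := hB.compl_closure_sdiff_singleton_isCocircuit hv.1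
  have hvCK : v ∈ M.fundCircuit v B' ∩ (M.E \ M.closure (B \ {v})) :=
    ⟨M.mem_fundCircuit v B', hvE, hB.indep.notMem_closure_sdiff_of_mem hv.1⟩
  obtain ⟨g, ⟨hgC, hgE, hgcl⟩, hgv⟩ :=
    (hC.isCocircuit_inter_nontrivial hK ⟨v, hvCK⟩).exists_ne v
  have hgB' : g ∈ B' := (M.fundCircuit_subset_insert v B' hgC).resolve_left hgv
  have hgB : g ∉ B := fun hgB =>
    hgcl (M.subset_closure _ (sdiff_subset.trans hB.subset_ground) ⟨hgB, hgv⟩)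
  refine ⟨g, ⟨hgB', hgB⟩, hB.exchange_base_of_notMem_closure hv.1 hgcl hgE, ?_⟩
  have hI := (hB'.indep.mem_fundCircuit_iff (by rwa [hB'.closure_eq]) hv.2).1 hgC
  rw [insert_sdiff_singleton_comm hgv.symm]
  exact hB'.exchange_isBase_of_indep' hgB' hv.2 hI

end Matroid

section MaxWeightBase

variable {α : Type*} [Fintype α] {M : Matroid α} {w w' : α → ℝ} {B B' : Set α} {v : α}

theorem isMaxWeightBase_iff_finsum :
    IsMaxWeightBase M w B ↔
      M.IsBase B ∧ ∀ B', M.IsBase B' → ∑ᶠ e ∈ B', w e ≤ ∑ᶠ e ∈ B, w e := by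
  simp only [IsMaxWeightBase, finsum_mem_eq_finite_toFinset_sum _ (toFinite _)]

theorem IsMaxWeightBase.of_le_of_eqOn (hB : IsMaxWeightBase M w B) (hle : w' ≤ w)
    (hBw : EqOn w' w B) : IsMaxWeightBase M w' B :=
  ⟨hB.1, fun B' hB' => calc
    _ ≤ ∑ e ∈ B'.toFinite.toFinset, w e := Finset.sum_le_sum fun e _ => hle e
    _ ≤ _ := hB.2 B' hB'
    _ = _ := Finset.sum_congr rfl fun _ he => (hBw ((toFinite B).mem_toFinset.1 he)).symm⟩

theorem IsMaxWeightBase.exists_exchange_weight_le (hB : IsMaxWeightBase M w B)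
    (hB' : M.IsBase B') (hv : v ∈ B \ B') :
    ∃ g ∈ B' \ B, M.IsBase (insert g (B \ {v})) ∧
      ∑ᶠ e ∈ B', w e ≤ w g + ∑ᶠ e ∈ B \ {v}, w e := by
  obtain ⟨g, hg, hgB, hvB'⟩ := hB.1.exists_symm_exchange hB' hv
  refine ⟨g, hg, hgB, ?_⟩
  have hmax := (isMaxWeightBase_iff_finsum.1 hB).2 _ hvB'
  rw [finsum_mem_insert _ (fun h => hv.2 h.1) (toFinite _),
    finsum_mem_eq_add_sdiff_singleton hv.1 (toFinite _)] at hmax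
  rw [finsum_mem_eq_add_sdiff_singleton hg.1 (toFinite _)]
  linarith

theorem IsMaxWeightBase.exists_swap_weight_le (hB : IsMaxWeightBase M w B) (hvB : v ∈ B)
    (hagree : ∀ e, e ≠ v → w' e = w e) (hB' : M.IsBase B') :
    ∃ g ∈ (univ \ B) ∪ {v}, M.Indep (insert g (B \ {v})) ∧
      ∑ᶠ e ∈ B', w' e ≤ w' g + ∑ᶠ e ∈ B \ {v}, w' e := by
  have hsum (S : Set α) (hS : v ∉ S) : ∑ᶠ e ∈ S, w' e = ∑ᶠ e ∈ S, w e :=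
    finsum_mem_congr rfl fun e he => hagree e (ne_of_mem_of_not_mem he hS)
  rw [hsum (B \ {v}) (fun h => h.2 rfl)]
  by_cases hvB' : v ∈ B'
  · refine ⟨v, Or.inr rfl, by simpa [hvB] using hB.1.indep, ?_⟩
    have hmax := (isMaxWeightBase_iff_finsum.1 hB).2 B' hB'
    rw [finsum_mem_eq_add_sdiff_singleton hvB' (toFinite _),
      finsum_mem_eq_add_sdiff_singleton hvB (toFinite _)] at hmax
    rw [finsum_mem_eq_add_sdiff_singleton hvB' (toFinite _), hsum _ (fun h => h.2 rfl)]
    linarith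
  · obtain ⟨g, hg, hgB, hle⟩ := hB.exists_exchange_weight_le hB' ⟨hvB, hvB'⟩
    refine ⟨g, Or.inl ⟨trivial, hg.2⟩, hgB.indep, ?_⟩
    rwa [hsum _ hvB', hagree g (ne_of_mem_of_not_mem hg.1 hvB')]

end MaxWeightBase

theorem maxWeightBase_decremental_update_general {α : Type*} [Fintype α]
    (M : Matroid α) (w w' : α → ℝ) (B : Set α) (hB : IsMaxWeightBase M w B)
    (v : α) (hv : w' v < w v) (hagree : ∀ e, e ≠ v → w' e = w e) :
    (v ∉ B → IsMaxWeightBase M w' B) ∧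
    (v ∈ B → ∀ u ∈ (Set.univ \ B) ∪ {v},
      M.Indep (insert u (B \ {v})) →
      (∀ u' ∈ (Set.univ \ B) ∪ {v}, M.Indep (insert u' (B \ {v})) → w' u' ≤ w' u) →
      IsMaxWeightBase M w' (insert u (B \ {v}))) := by
  have hle : w' ≤ w := fun e => (eq_or_ne e v).elim (fun h => h ▸ hv.le) fun h => (hagree e h).le
  refine ⟨fun hvB => hB.of_le_of_eqOn hle fun e he => hagree e (ne_of_mem_of_not_mem he hvB),
    fun hvB u hu huI hmax => ?_⟩
  have huB : u ∉ B \ {v} := by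
    rcases hu with ⟨-, huB⟩ | rfl
    · exact fun h => huB h.1
    · exact fun h => h.2 rfl
  refine isMaxWeightBase_iff_finsum.2
    ⟨Matroid.insert_isBase_of_insert_indep (fun h => h.2 rfl) huB (by simpa [hvB] using hB.1) huI,
      fun B' hB' => ?_⟩
  obtain ⟨g, hg, hgI, hB'le⟩ := hB.exists_swap_weight_le hvB hagree hB'
  rw [finsum_mem_insert _ huB (toFinite _)]
  linarith [hmax g hg hgI]

/-- Decremental update of a maximum weight basis: let `B` be a maximum weight basis of `M`
with respect to `w`, and let `w'` agree with `w` except `w' v < w v` at a single element `v`.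
If `v ∉ B` then `B` is still a maximum weight basis w.r.t. `w'`.  If `v ∈ B` and `u` is an
element of `(V \ B) ∪ {v}` of maximum `w'`-weight such that `(B - v) + u` is independent,
then `B - v + u` is a maximum weight basis w.r.t. `w'`. -/
theorem maxWeightBase_decremental_update {α : Type*} [Fintype α] [DecidableEq α]
    (M : Matroid α) (w w' : α → ℝ) (B : Set α) (hB : IsMaxWeightBase M w B)
    (v : α) (hv : w' v < w v) (hagree : ∀ e, e ≠ v → w' e = w e) :
    (v ∉ B → IsMaxWeightBase M w' B) ∧
    (v ∈ B → ∀ u ∈ (Set.univ \ B) ∪ {v},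
      M.Indep (insert u (B \ {v})) →
      (∀ u' ∈ (Set.univ \ B) ∪ {v}, M.Indep (insert u' (B \ {v})) → w' u' ≤ w' u) →
      IsMaxWeightBase M w' (insert u (B \ {v}))) :=
  maxWeightBase_decremental_update_general M w w' B hB v hv hagree
end
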